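/- Let M be a countable homogeneous structure with a stationary weak independence relation ⫫, and suppose g ∈ Aut(M) moves almost L-maximally. Let X, Y, C be finite sets with g(X) = Y and X ⫫_Y C, and let x be a finite tuple. Then there exists a ∈ Aut(M) fixing X ∪ Y pointwise such that g^a(x) ⫫_Y C, where g^a = a g a⁻¹. -/

import Mathlib

variable {M : Type*} [DecidableEq M]

/-- The finite set of coordinates of a tuple. -/
def tset {n : ℕ} (x : Fin n → M) : Finset M := Finset.univ.image x

/-- Two tuples realise the same type over the finite set `B` (types = orbits of the
pointwise stabiliser of `B` in the automorphism group `G`, by homogeneity). -/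
def SameTypeOver (G : Subgroup (Equiv.Perm M)) (B : Finset M) {n : ℕ}
    (x y : Fin n → M) : Prop :=
  ∃ g ∈ G, (∀ b ∈ B, g b = b) ∧ ∀ i, g (x i) = y i

/-- `indep` is a stationary weak independence relation on `M` (with automorphism
group `G`): invariance, monotonicity, transitivity, existence and stationarity,
each in left and right form; symmetry is NOT assumed. -/
structure IsSWIR (G : Subgroup (Equiv.Perm M))
    (indep : Finset M → Finset M → Finset M → Prop) : Prop where
  invariance : ∀ g ∈ G, ∀ A B C : Finset M,
    indep A B C → indep (A.image g) (B.image g) (C.image g)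
  monotone_right : ∀ A B C D : Finset M,
    indep A B (C ∪ D) → indep A B C ∧ indep A (B ∪ C) D
  monotone_left : ∀ A B C D : Finset M,
    indep (A ∪ D) B C → indep A B C ∧ indep D (A ∪ B) C
  trans_right : ∀ A B C D : Finset M, indep A B C → indep A (B ∪ C) D → indep A B D
  trans_left : ∀ A B C D : Finset M, indep A B C → indep D (A ∪ B) C → indep D B C
  exists_right : ∀ (B C : Finset M) (n : ℕ) (x : Fin n → M),
    ∃ a : Fin n → M, SameTypeOver G B x a ∧ indep (tset a) B C
  exists_left : ∀ (B C : Finset M) (n : ℕ) (x : Fin n → M),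
    ∃ a : Fin n → M, SameTypeOver G B x a ∧ indep C B (tset a)
  stationary_right : ∀ (B C : Finset M) (n : ℕ) (x y : Fin n → M),
    SameTypeOver G B x y → indep (tset x) B C → indep (tset y) B C →
    SameTypeOver G (B ∪ C) x y
  stationary_left : ∀ (B C : Finset M) (n : ℕ) (x y : Fin n → M),
    SameTypeOver G B x y → indep C B (tset x) → indep C B (tset y) →
    SameTypeOver G (B ∪ C) x y

/-- `g` moves almost R-maximally: every type over a finite `X` has a realisation `a`
with `a ⫫_X g(a)`. -/
def MovesAlmostRMax (G : Subgroup (Equiv.Perm M))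
    (indep : Finset M → Finset M → Finset M → Prop) (g : Equiv.Perm M) : Prop :=
  ∀ (X : Finset M) (n : ℕ) (x : Fin n → M),
    ∃ a : Fin n → M, SameTypeOver G X x a ∧
      indep (tset a) X (tset (fun i => g (a i)))

/-- `g` moves almost L-maximally: every type over a finite `X` has a realisation `a`
with `g(a) ⫫_X a`. -/
def MovesAlmostLMax (G : Subgroup (Equiv.Perm M))
    (indep : Finset M → Finset M → Finset M → Prop) (g : Equiv.Perm M) : Prop :=
  ∀ (X : Finset M) (n : ℕ) (x : Fin n → M),
    ∃ a : Fin n → M, SameTypeOver G X x a ∧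
      indep (tset (fun i => g (a i))) X (tset a)

/-! Realise the type of `x` followed by an enumeration of `C` over `X ∪ Y` by some `h (x, C)`
with `g h (x, C) ⫫_{X ∪ Y} h (x, C)`, where `h` fixes `X ∪ Y`. Moving by `h⁻¹` gives
`h⁻¹ g h (x) ⫫_{X ∪ Y} C`, and left transitivity with `X ⫫_Y C` turns this into
`h⁻¹ g h (x) ⫫_Y C`; so `a = h⁻¹` works. -/

lemma tset_comp {N : Type*} [DecidableEq N] {n : ℕ} (f : M → N) (w : Fin n → M) :
    tset (fun i => f (w i)) = (tset w).image f := by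
  simp only [tset, Finset.image_image]
  rfl

lemma tset_append {n k : ℕ} (x : Fin n → M) (c : Fin k → M) :
    tset (Fin.append x c) = tset x ∪ tset c := by
  ext m
  simp only [tset, Finset.mem_image, Finset.mem_union, Finset.mem_univ, true_and]
  constructor
  · rintro ⟨i, rfl⟩
    induction i using Fin.addCases with
    | left j => exact Or.inl ⟨j, (Fin.append_left x c j).symm⟩
    | right j => exact Or.inr ⟨j, (Fin.append_right x c j).symm⟩
  · rintro (⟨j, rfl⟩ | ⟨j, rfl⟩)
    · exact ⟨Fin.castAdd k j, Fin.append_left x c j⟩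
    · exact ⟨Fin.natAdd n j, Fin.append_right x c j⟩

lemma tset_comp_append {N : Type*} [DecidableEq N] {n k : ℕ} (f : M → N) (x : Fin n → M)
    (c : Fin k → M) :
    tset (fun i => f (Fin.append x c i)) = tset (fun i => f (x i)) ∪ tset (fun i => f (c i)) := by
  rw [tset_comp f (Fin.append x c), tset_append, Finset.image_union, tset_comp f x, tset_comp f c]

lemma exists_tset_eq (C : Finset M) : ∃ (k : ℕ) (c : Fin k → M), tset c = C :=
  ⟨C.toList.length, C.toList.get, by
    ext m
    simp only [tset, Finset.mem_image, Finset.mem_univ, true_and]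
    rw [← Finset.mem_toList, List.mem_iff_get]⟩

namespace IsSWIR

variable {G : Subgroup (Equiv.Perm M)} {indep : Finset M → Finset M → Finset M → Prop}

lemma mono (hswir : IsSWIR G indep) {A A' B C C' : Finset M} (h : indep A B C)
    (hA : A' ⊆ A) (hC : C' ⊆ C) : indep A' B C' := by
  rw [← Finset.union_eq_right.2 hA, ← Finset.union_eq_right.2 hC] at h
  exact (hswir.monotone_right A' B C' C (hswir.monotone_left A' B _ A h).1).1

lemma image_of_forall_mem_fixed (hswir : IsSWIR G indep) {f : Equiv.Perm M} (hf : f ∈ G)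
    {A B C : Finset M} (hB : ∀ b ∈ B, f b = b) (h : indep A B C) :
    indep (A.image f) B (C.image f) := by
  have hfB : B.image f = B := by
    rw [Finset.image_congr (g := id) hB, Finset.image_id]
  simpa only [hfB] using hswir.invariance f hf A B C h

end IsSWIR

theorem swir_move_tuple_general {M : Type*} [DecidableEq M]
    (G : Subgroup (Equiv.Perm M)) (indep : Finset M → Finset M → Finset M → Prop)
    (hswir : IsSWIR G indep) (g : Equiv.Perm M)
    (hL : MovesAlmostLMax G indep g)
    (X Y C : Finset M) (hind : indep X Y C)
    (n : ℕ) (x : Fin n → M) :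
    ∃ a ∈ G, (∀ m ∈ X ∪ Y, a m = m) ∧
      indep (tset (fun i => (a * g * a⁻¹) (x i))) Y C := by
  obtain ⟨k, c, rfl⟩ := exists_tset_eq C
  obtain ⟨_, ⟨h, hG, hfix, hh⟩, hmoved⟩ := hL (X ∪ Y) (n + k) (Fin.append x c)
  obtain rfl : _ = fun i => h (Fin.append x c i) := funext fun i => (hh i).symm
  have hfix_inv : ∀ m ∈ X ∪ Y, h⁻¹ m = m := fun m hm =>
    Equiv.Perm.inv_eq_iff_eq.2 (hfix m hm).symm
  have hback : indep (tset fun i => (h⁻¹ * g * h) (Fin.append x c i)) (X ∪ Y)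
      (tset (Fin.append x c)) := by
    have hcancel : (tset fun i => h⁻¹ (h (Fin.append x c i))) = tset (Fin.append x c) :=
      congrArg tset (funext fun i => h.symm_apply_apply _)
    rw [← hcancel]
    simp only [Equiv.Perm.mul_apply, tset_comp ⇑h⁻¹]
    exact hswir.image_of_forall_mem_fixed (G.inv_mem hG) hfix_inv hmoved
  rw [tset_comp_append, tset_append] at hback
  refine ⟨h⁻¹, G.inv_mem hG, hfix_inv, ?_⟩
  rw [inv_inv]
  exact hswir.trans_left X Y _ _ hind <|
    hswir.mono hback Finset.subset_union_left Finset.subset_union_right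

/-- Lemma 2.7 (Lemma 3.5 of Tent–Ziegler, asymmetric form): if `g` moves almost
L-maximally, `g(X) = Y`, `X ⫫_Y C` and `x` is a tuple, then there is `a ∈ Aut(M)`
fixing `X ∪ Y` pointwise with `gᵃ(x) ⫫_Y C`. -/
theorem swir_move_tuple {M : Type*} [DecidableEq M] [Countable M]
    (G : Subgroup (Equiv.Perm M)) (indep : Finset M → Finset M → Finset M → Prop)
    (hswir : IsSWIR G indep) (g : Equiv.Perm M) (hg : g ∈ G)
    (hL : MovesAlmostLMax G indep g)
    (X Y C : Finset M) (hXY : X.image ⇑g = Y) (hind : indep X Y C)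
    (n : ℕ) (x : Fin n → M) :
    ∃ a ∈ G, (∀ m ∈ X ∪ Y, a m = m) ∧
      indep (tset (fun i => (a * g * a⁻¹) (x i))) Y C :=
  swir_move_tuple_general G indep hswir g hL X Y C hind n x
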